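/- Let t ≥ 1 and i ≥ 1 be integers and A a finite alphabet with |A| ≥ 2. The maximum cardinality of a code C ⊆ (A^{4t})ⁱ that is unambiguous for the Scenario-A.1 i-shot channel of the family-𝔡_t network ([2t, 2t],[1, 1]), taken over all choices of per-round node functions (f₁ʲ, f₂ʲ : A^{2t} → A for j = 1,…,i), equals |A|ⁱ. Equivalently, the i-shot capacity of 𝔡_t is 1, the same as its one-shot capacity, in both adversarial scenarios. -/

import Mathlib

/-- A code `C` is unambiguous for the channel `Ω` if distinct codewords have
disjoint fan-out sets. -/
def Unambiguous {X Y : Type*} (Ω : X → Set Y) (C : Finset X) : Prop :=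
  ∀ x ∈ C, ∀ y ∈ C, x ≠ y → Ω x ∩ Ω y = ∅

/-- The first `2t` coordinates of a vector of length `4t` (the input of node
`V₁`). -/
def firstPartD (t : ℕ) {A : Type*} (v : Fin (4 * t) → A) : Fin (2 * t) → A :=
  fun m => v ⟨m.val, by have h := m.isLt; omega⟩

/-- The last `2t` coordinates of a vector of length `4t` (the input of node
`V₂`). -/
def lastPartD (t : ℕ) {A : Type*} (v : Fin (4 * t) → A) : Fin (2 * t) → A :=
  fun m => v ⟨2 * t + m.val, by have h := m.isLt; omega⟩

/-- The `i`-shot channel of the family-`𝔡_t` network `([2t,2t],[1,1])` in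
Scenario A.1: the adversary picks a set `S` of at most `t` of the `4t` source
edges and may corrupt only those edges, the same ones in every round.
Per-round node functions are `f₁ʲ, f₂ʲ : A^{2t} → A`. -/
def famDA1Channel {A : Type*} (t i : ℕ)
    (f₁ : Fin i → (Fin (2 * t) → A) → A)
    (f₂ : Fin i → (Fin (2 * t) → A) → A)
    (x : Fin i → Fin (4 * t) → A) : Set (Fin i → A × A) :=
  { z | ∃ S : Finset (Fin (4 * t)), S.card ≤ t ∧
      ∃ y : Fin i → Fin (4 * t) → A,
        (∀ j : Fin i, ∀ m, m ∉ S → y j m = x j m) ∧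
        (∀ j : Fin i,
          z j = (f₁ j (firstPartD t (y j)), f₂ j (lastPartD t (y j)))) }

/-!
Upper bound: a codeword is determined by the symbols node `V₂` emits. If two codewords `x ≠ x'`
gave the same `V₂`-outputs, an adversary corrupting edges `[0, t)` of `x` to agree with `x'` and
one corrupting edges `[t, 2t)` of `x'` to agree with `x` would feed `V₁` the same word and
`V₂` words with the same image, so the two fan-out sets would meet.

Lower bound: send each round's symbol on all `4t` edges and let both nodes take a strict majority
vote, with a fixed default `d` when there is none. The `≤ t` corrupted edges split as `s₁ + s₂ ≤ t`
between the two halves of `2t` edges, so each node sees the true symbol at least `t` times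
(hence outputs it or `d`) and one of them more than `t` times (hence outputs it). The received pair
therefore lies in `{(a, a), (a, d), (d, a)}`, and these sets are disjoint for distinct `a`.
-/

open Finset

theorem Unambiguous.card_le {X Y Z : Type*} [Fintype Z] {Ω : X → Set Y} {C : Finset X}
    (hC : Unambiguous Ω C) (g : X → Z) (hg : ∀ x x', g x = g x' → (Ω x ∩ Ω x').Nonempty) :
    #C ≤ Fintype.card Z := by
  refine (card_le_card_of_injOn g (fun _ _ => mem_univ _) fun x hx x' hx' hxx' => ?_).trans_eq
    card_univ
  by_contra hne
  exact (hg x x' hxx').ne_empty (hC x hx x' hx' hne)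

theorem card_filter_val_mem_Ico_le (n a b : ℕ) : #{k : Fin n | k.val ∈ Ico a b} ≤ b - a := by
  rw [← Nat.card_Ico]
  exact card_le_card_of_injOn Fin.val (fun k hk => (mem_filter.1 hk).2) Fin.val_injective.injOn

section Majority

variable {ι A : Type*} [Fintype ι] [DecidableEq A]

open Classical in
noncomputable def majorityOr (d : A) (v : ι → A) : A :=
  if h : ∃ e, Fintype.card ι < 2 * #{m | v m = e} then h.choose else d

theorem card_filter_eq_add_card_filter_eq_le {v : ι → A} {e e' : A} (h : e ≠ e') :
    #{m | v m = e} + #{m | v m = e'} ≤ Fintype.card ι := by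
  classical
  rw [← card_union_of_disjoint (disjoint_filter.2 fun m _ he he' => h (he.symm.trans he'))]
  exact card_le_univ _

theorem eq_of_card_le_two_mul_of_lt_two_mul {v : ι → A} {e e' : A}
    (he : Fintype.card ι ≤ 2 * #{m | v m = e}) (he' : Fintype.card ι < 2 * #{m | v m = e'}) :
    e = e' := by
  by_contra h
  have := card_filter_eq_add_card_filter_eq_le (v := v) h
  omega

theorem majorityOr_eq_of_lt {d e : A} {v : ι → A}
    (h : Fintype.card ι < 2 * #{m | v m = e}) : majorityOr d v = e := by
  have hex : ∃ e, Fintype.card ι < 2 * #{m | v m = e} := ⟨e, h⟩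
  rw [majorityOr, dif_pos hex]
  exact (eq_of_card_le_two_mul_of_lt_two_mul h.le hex.choose_spec).symm

theorem majorityOr_eq_or_eq_default {d e : A} {v : ι → A}
    (h : Fintype.card ι ≤ 2 * #{m | v m = e}) : majorityOr d v = e ∨ majorityOr d v = d := by
  unfold majorityOr
  split_ifs with hex
  · exact .inl (eq_of_card_le_two_mul_of_lt_two_mul h hex.choose_spec).symm
  · exact .inr rfl

end Majority

section Channel

variable {A : Type*} {t i : ℕ}

theorem card_firstPartD_ne_add_card_lastPartD_ne_le [DecidableEq A] {S : Finset (Fin (4 * t))}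
    {y : Fin (4 * t) → A} {a : A} (hy : ∀ m ∉ S, y m = a) :
    #{m | firstPartD t y m ≠ a} + #{m | lastPartD t y m ≠ a} ≤ #S := by
  let e₁ : Fin (2 * t) ↪ Fin (4 * t) :=
    ⟨fun m => ⟨m, by have := m.isLt; omega⟩, fun m m' h => by simpa [Fin.ext_iff] using h⟩
  let e₂ : Fin (2 * t) ↪ Fin (4 * t) :=
    ⟨fun m => ⟨2 * t + m, by have := m.isLt; omega⟩, fun m m' h => by simpa [Fin.ext_iff] using h⟩
  have hdisj : Disjoint (map e₁ {m | firstPartD t y m ≠ a}) (map e₂ {m | lastPartD t y m ≠ a}) := by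
    simp only [disjoint_left, mem_map, not_exists, not_and]
    rintro _ ⟨m, -, rfl⟩ m' - h
    have : 2 * t + (m' : ℕ) = m := congrArg Fin.val h
    omega
  rw [← card_map e₁, ← card_map e₂, ← card_union_of_disjoint hdisj]
  refine card_le_card fun k hk => ?_
  simp only [mem_union, mem_map, mem_filter, mem_univ, true_and] at hk
  by_contra hkS
  rcases hk with ⟨m, hm, rfl⟩ | ⟨m, hm, rfl⟩ <;> exact hm (hy _ hkS)

theorem majorityOr_pair_mem [DecidableEq A] (ht : 1 ≤ t) (d : A) {S : Finset (Fin (4 * t))}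
    (hS : #S ≤ t) {y : Fin (4 * t) → A} {a : A} (hy : ∀ m ∉ S, y m = a) :
    (majorityOr d (firstPartD t y), majorityOr d (lastPartD t y)) ∈
      ({(a, a), (a, d), (d, a)} : Set (A × A)) := by
  have hmis := card_firstPartD_ne_add_card_lastPartD_ne_le hy
  have h₁ := card_filter_add_card_filter_not (s := univ) (p := fun m => firstPartD t y m = a)
  have h₂ := card_filter_add_card_filter_not (s := univ) (p := fun m => lastPartD t y m = a)
  simp only [card_univ, Fintype.card_fin] at h₁ h₂
  simp only [ne_eq] at hmis
  have hfirst := majorityOr_eq_or_eq_default (d := d) (v := firstPartD t y) (e := a)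
    (by rw [Fintype.card_fin]; omega)
  have hlast := majorityOr_eq_or_eq_default (d := d) (v := lastPartD t y) (e := a)
    (by rw [Fintype.card_fin]; omega)
  have hone : majorityOr d (firstPartD t y) = a ∨ majorityOr d (lastPartD t y) = a := by
    by_cases hsmall : #{m | ¬firstPartD t y m = a} < t
    · exact .inl (majorityOr_eq_of_lt (by rw [Fintype.card_fin]; omega))
    · exact .inr (majorityOr_eq_of_lt (by rw [Fintype.card_fin]; omega))
  simp only [Set.mem_insert_iff, Set.mem_singleton_iff, Prod.ext_iff]
  grind

theorem famDA1Channel_majorityOr_apply_mem [DecidableEq A] (ht : 1 ≤ t) (d : A) {a : Fin i → A}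
    {z : Fin i → A × A}
    (hz : z ∈ famDA1Channel t i (fun _ => majorityOr d) (fun _ => majorityOr d) fun j _ => a j)
    (j : Fin i) : z j ∈ ({(a j, a j), (a j, d), (d, a j)} : Set (A × A)) := by
  obtain ⟨S, hS, y, hy, hzy⟩ := hz
  rw [hzy j]
  exact majorityOr_pair_mem ht d hS (hy j)

def repetitionCode [Fintype A] [DecidableEq A] (i n : ℕ) : Finset (Fin i → Fin n → A) :=
  univ.image fun (a : Fin i → A) j (_ : Fin n) => a j

theorem card_repetitionCode [Fintype A] [DecidableEq A] {n : ℕ} (hn : 0 < n) :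
    #(repetitionCode (A := A) i n) = Fintype.card A ^ i := by
  rw [repetitionCode, card_image_of_injective _ fun a b h => funext fun j =>
    congrFun (congrFun h j) ⟨0, hn⟩, card_univ, Fintype.card_fun, Fintype.card_fin]

theorem unambiguous_repetitionCode [Fintype A] [DecidableEq A] (ht : 1 ≤ t) (d : A) :
    Unambiguous (famDA1Channel t i (fun _ => majorityOr d) (fun _ => majorityOr d))
      (repetitionCode i (4 * t)) := by
  simp only [Unambiguous, repetitionCode, mem_image, mem_univ, true_and]
  rintro _ ⟨a, rfl⟩ _ ⟨b, rfl⟩ hne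
  obtain ⟨j, hj⟩ : ∃ j, a j ≠ b j := by
    by_contra! h
    exact hne (funext fun j => funext fun _ => h j)
  refine Set.eq_empty_of_forall_notMem fun z ⟨hza, hzb⟩ => ?_
  have ha := famDA1Channel_majorityOr_apply_mem ht d hza j
  have hb := famDA1Channel_majorityOr_apply_mem ht d hzb j
  simp only [Set.mem_insert_iff, Set.mem_singleton_iff] at ha hb
  grind

theorem famDA1Channel_inter_nonempty (f₁ f₂ : Fin i → (Fin (2 * t) → A) → A)
    {x x' : Fin i → Fin (4 * t) → A}
    (h : ∀ j, f₂ j (lastPartD t (x j)) = f₂ j (lastPartD t (x' j))) :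
    (famDA1Channel t i f₁ f₂ x ∩ famDA1Channel t i f₁ f₂ x').Nonempty := by
  let S₁ : Finset (Fin (4 * t)) := {k | k.val ∈ Ico 0 t}
  let S₂ : Finset (Fin (4 * t)) := {k | k.val ∈ Ico t (2 * t)}
  let y : Fin i → Fin (4 * t) → A := fun j m => if m ∈ S₁ then x' j m else x j m
  let y' : Fin i → Fin (4 * t) → A := fun j m => if m ∈ S₂ then x j m else x' j m
  have hfirst : ∀ j, firstPartD t (y j) = firstPartD t (y' j) := fun j => funext fun m => by
    have := m.isLt
    simp only [firstPartD, y, y', S₁, S₂, mem_filter, mem_univ, mem_Ico, true_and]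
    split_ifs <;> first | rfl | omega
  have hlast : ∀ j, lastPartD t (y j) = lastPartD t (x j) := fun j => funext fun m =>
    if_neg (by simp [S₁]; omega)
  have hlast' : ∀ j, lastPartD t (y' j) = lastPartD t (x' j) := fun j => funext fun m =>
    if_neg (by simp [S₂])
  refine ⟨_, ⟨S₁, (card_filter_val_mem_Ico_le _ 0 t).trans_eq t.sub_zero, y,
      fun j m hm => if_neg hm, fun j => rfl⟩,
    ⟨S₂, (card_filter_val_mem_Ico_le _ t (2 * t)).trans_eq (by omega), y',
      fun j m hm => if_neg hm, fun j => ?_⟩⟩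
  dsimp only
  rw [hfirst, hlast, hlast', h j]

end Channel

theorem famD_multishot_capacity_general
    (A : Type*) [Fintype A] [DecidableEq A] (hA : 2 ≤ Fintype.card A)
    (t i : ℕ) (ht : 1 ≤ t) :
    IsGreatest { n : ℕ |
        ∃ (f₁ : Fin i → (Fin (2 * t) → A) → A)
          (f₂ : Fin i → (Fin (2 * t) → A) → A)
          (C : Finset (Fin i → Fin (4 * t) → A)),
          Unambiguous (famDA1Channel t i f₁ f₂) C ∧ C.card = n }
      (Fintype.card A ^ i) := by
  obtain ⟨d⟩ : Nonempty A := Fintype.card_pos_iff.mp (by omega)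
  refine ⟨⟨_, _, _, unambiguous_repetitionCode ht d, card_repetitionCode (by omega)⟩, ?_⟩
  rintro _ ⟨f₁, f₂, C, hC, rfl⟩
  calc #C ≤ Fintype.card (Fin i → A) :=
        hC.card_le (fun x j => f₂ j (lastPartD t (x j))) fun _ _ h =>
          famDA1Channel_inter_nonempty f₁ f₂ (congrFun h)
    _ = Fintype.card A ^ i := by rw [Fintype.card_fun, Fintype.card_fin]

/-- Scenario A.1 multishot capacity of the family `𝔡_t = ([2t,2t],[1,1])`
(`t ≥ 1`): the maximum cardinality of an unambiguous code, over all choices of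
per-round node functions, is `|A|^i`. -/
theorem famD_multishot_capacity
    (A : Type*) [Fintype A] [DecidableEq A] (hA : 2 ≤ Fintype.card A)
    (t i : ℕ) (ht : 1 ≤ t) (hi : 1 ≤ i) :
    IsGreatest { n : ℕ |
        ∃ (f₁ : Fin i → (Fin (2 * t) → A) → A)
          (f₂ : Fin i → (Fin (2 * t) → A) → A)
          (C : Finset (Fin i → Fin (4 * t) → A)),
          Unambiguous (famDA1Channel t i f₁ f₂) C ∧ C.card = n }
      (Fintype.card A ^ i) :=
  famD_multishot_capacity_general A hA t i ht
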